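/- (Theorem D.3, second part: a non-linear network perfectly classifies under feature noise) Let D' be as in the first part of Theorem D.3, and suppose α^q P < 1. Then the two-layer network F(w, x) = Σ_{c∈[C]} Σ_{p∈[P]} ψ(⟨w_c, x_p⟩) with weights w_1 = Σ_{k∈[K]} v_k and w_c = 0 for all c ≥ 2 satisfies Pr_{(x,y)∼D'}[ sign F(w, x) ≠ sign y ] = 0; indeed, for every (x, y) in the support of D', y F(w, x) ≥ (1/q)(1 − α^q P) > 0. -/
import Mathlib

open Filter MeasureTheory ProbabilityTheory
open scoped BigOperators ENNReal NNReal

noncomputable section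

def dot {d : ℕ} (a b : Fin d → ℝ) : ℝ := ∑ i, a i * b i

def psi (q : ℕ) (z : ℝ) : ℝ :=
  if |z| ≤ 1 then Real.sign z * |z| ^ q / q
  else if 1 ≤ z then z - ((q : ℝ) - 1) / q
  else z + ((q : ℝ) - 1) / q

def netF (q C P : ℕ) {d : ℕ} (w : ℕ → Fin d → ℝ) (x : ℕ → Fin d → ℝ) : ℝ :=
  ∑ c ∈ Finset.range C, ∑ p ∈ Finset.range P, psi q (dot (w c) (x p))

def IsSampleD' (K P : ℕ) {d : ℕ} (α : ℝ) (v : ℕ → Fin d → ℝ)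
    (x : ℕ → Fin d → ℝ) (y : ℝ) (kst pstar : ℕ) : Prop :=
  (y = 1 ∨ y = -1) ∧ kst < K ∧ pstar < P ∧
    x pstar = (fun j => y * v kst j) ∧
    ∀ p < P, p ≠ pstar →
      ∃ a k, 0 ≤ a ∧ a ≤ α ∧ k < K ∧ x p = fun j => -(a * y) * v k j

lemma psi_zero (q : ℕ) : psi q 0 = 0 := by simp [psi]

lemma mul_psi_one (q : ℕ) (hq : 1 ≤ q) (y : ℝ) (hy : y = 1 ∨ y = -1) :
    y * psi q y = 1 / q := by
  rcases hy with rfl | rfl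
  · simp [psi, Real.sign_of_pos, one_pow]
  · rw [psi]
    have h1 : |(-1:ℝ)| = 1 := by norm_num
    rw [if_pos (le_of_eq h1), h1, one_pow, Real.sign_of_neg (by norm_num : (-1:ℝ) < 0)]
    ring

lemma mul_psi_noise (q : ℕ) (hq : 1 ≤ q) (y a : ℝ) (hy : y = 1 ∨ y = -1)
    (ha0 : 0 ≤ a) (ha1 : a ≤ 1) :
    y * psi q (-(a * y)) = -(a ^ q) / q := by
  rcases eq_or_lt_of_le ha0 with h | h
  · rw [← h]
    simp [psi_zero, zero_pow (by omega : q ≠ 0)]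
  · rcases hy with rfl | rfl
    · rw [mul_one, psi, if_pos (by rw [abs_neg, abs_of_pos h]; exact ha1),
        Real.sign_of_neg (by linarith), abs_neg, abs_of_pos h]
      ring
    · rw [psi]
      have he : -(a * -1) = a := by ring
      rw [he, if_pos (by rw [abs_of_pos h]; exact ha1),
        Real.sign_of_pos h, abs_of_pos h]
      ring

/-- **Theorem D.3, second part.**  With feature noise satisfying `α^q P < 1`, the
two-layer network with weights `w₁ = ∑_k v_k` and `w_c = 0` (`c ≥ 2`) classifies
every sample in the support of `D'` with margin `(1/q)(1 − α^q P) > 0`, and hence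
has zero test error. -/
theorem nonlinear_perfect_classification_with_feature_noise
    (q : ℕ) (hq : 3 ≤ q) (d K P C : ℕ) (hK : 0 < K) (hC : 0 < C)
    (α : ℝ) (hα : 0 ≤ α) (hbound : α ^ q * P < 1)
    (v : ℕ → Fin d → ℝ)
    (hortho : ∀ k < K, ∀ k' < K, dot (v k) (v k') = if k = k' then 1 else 0)
    (w : ℕ → Fin d → ℝ)
    (hw0 : w 0 = fun j => ∑ k ∈ Finset.range K, v k j)
    (hwc : ∀ c, 0 < c → w c = fun _ => 0) :
    (∀ {x : ℕ → Fin d → ℝ} {y : ℝ} {kst pstar : ℕ},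
        IsSampleD' K P α v x y kst pstar →
        0 < (1 / q : ℝ) * (1 - α ^ q * P) ∧
        (1 / q : ℝ) * (1 - α ^ q * P) ≤ y * netF q C P w x) ∧
    (∀ (Ω : Type) (_ : MeasurableSpace Ω) (μ : Measure Ω), IsProbabilityMeasure μ →
      ∀ (X : Ω → ℕ → Fin d → ℝ) (Y : Ω → ℝ) (Kst Pst : Ω → ℕ),
        (∀ ω, IsSampleD' K P α v (X ω) (Y ω) (Kst ω) (Pst ω)) →
        μ {ω | Real.sign (netF q C P w (X ω)) ≠ Real.sign (Y ω)} = 0) := by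
  have hq1 : 1 ≤ q := by omega
  have hqR : (0:ℝ) < q := by positivity
  have hA : (0:ℝ) ≤ α ^ q := pow_nonneg hα q
  have hmarg : 0 < (1 / q : ℝ) * (1 - α ^ q * P) :=
    mul_pos (by positivity) (by linarith)
  have key : ∀ (c : ℝ) (k'), k' < K →
      dot (fun j => ∑ k ∈ Finset.range K, v k j) (fun j => c * v k' j) = c := by
    intro c k' hk'
    unfold dot
    have h1 : ∀ i : Fin d, (∑ k ∈ Finset.range K, v k i) * (c * v k' i)
        = ∑ k ∈ Finset.range K, c * (v k i * v k' i) := by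
      intro i; rw [Finset.sum_mul]; apply Finset.sum_congr rfl; intro k _; ring
    simp_rw [h1]
    rw [Finset.sum_comm]
    have h2 : ∀ k ∈ Finset.range K, ∑ i : Fin d, c * (v k i * v k' i)
        = c * (if k = k' then 1 else 0) := by
      intro k hk
      rw [← Finset.mul_sum, ← hortho k (Finset.mem_range.mp hk) k' hk']
      rfl
    rw [Finset.sum_congr rfl h2]
    simp [Finset.mem_range.mpr hk']
  have main : ∀ {x : ℕ → Fin d → ℝ} {y : ℝ} {kst pstar : ℕ},
      IsSampleD' K P α v x y kst pstar →
      (1 / q : ℝ) * (1 - α ^ q * P) ≤ y * netF q C P w x := by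
    rintro x y kst pstar ⟨hy, hkst, hpst, hxst, hbg⟩
    have hP1 : 1 ≤ P := by omega
    have hPR : (1:ℝ) ≤ (P:ℝ) := by exact_mod_cast hP1
    have hα1 : α ≤ 1 := by
      by_contra h
      push_neg at h
      have h1 : (1:ℝ) ≤ α ^ q := one_le_pow₀ h.le
      nlinarith
    have hnet : netF q C P w x = ∑ p ∈ Finset.range P, psi q (dot (w 0) (x p)) := by
      unfold netF
      apply Finset.sum_eq_single_of_mem 0 (Finset.mem_range.mpr hC)
      intro c _ hc
      rw [hwc c (Nat.pos_of_ne_zero hc)]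
      have hz : ∀ p : ℕ, dot (fun _ : Fin d => (0:ℝ)) (x p) = 0 := by
        intro p; unfold dot; simp
      simp [hz, psi_zero]
    rw [hnet, Finset.mul_sum,
      ← Finset.add_sum_erase _ _ (Finset.mem_range.mpr hpst)]
    have hterm : y * psi q (dot (w 0) (x pstar)) = 1 / q := by
      rw [hw0, hxst, key y kst hkst]
      exact mul_psi_one q hq1 y hy
    rw [hterm]
    have hrest : ∀ p ∈ (Finset.range P).erase pstar,
        -(α ^ q) / q ≤ y * psi q (dot (w 0) (x p)) := by
      intro p hp
      obtain ⟨hne, hpP⟩ := Finset.mem_erase.mp hp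
      obtain ⟨a, k, ha0, haα, hk, hxp⟩ := hbg p (Finset.mem_range.mp hpP) hne
      rw [hw0, hxp, key (-(a*y)) k hk, mul_psi_noise q hq1 y a hy ha0 (haα.trans hα1)]
      have hle : a ^ q ≤ α ^ q := pow_le_pow_left₀ ha0 haα q
      exact div_le_div_of_nonneg_right (by linarith) hqR.le
    have hS := Finset.card_nsmul_le_sum _ _ _ hrest
    rw [Finset.card_erase_of_mem (Finset.mem_range.mpr hpst), Finset.card_range,
      nsmul_eq_mul, Nat.cast_sub hP1, Nat.cast_one] at hS
    have hexp : ((P:ℝ) - 1) * (-(α ^ q) / q) = (1/q) * (-((P:ℝ)-1) * α ^ q) := by ring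
    have hstep : (1/q:ℝ) * (1 - α ^ q * P) ≤ 1/q + ((P:ℝ) - 1) * (-(α ^ q) / q) := by
      rw [hexp]
      nlinarith
    linarith
  refine ⟨fun h => ⟨hmarg, main h⟩, ?_⟩
  intro Ω _ μ _ X Y Kst Pst hsamp
  have hempty : {ω | Real.sign (netF q C P w (X ω)) ≠ Real.sign (Y ω)} = ∅ := by
    ext ω
    simp only [Set.mem_setOf_eq, Set.mem_empty_iff_false, iff_false, not_not,
      ne_eq, Decidable.not_not]
    have hm := main (hsamp ω)
    rcases (hsamp ω).1 with hy | hy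
    · rw [hy] at hm ⊢
      rw [mul_comm] at hm
      have hpos : 0 < netF q C P w (X ω) := by nlinarith
      rw [Real.sign_of_pos hpos, Real.sign_one]
    · rw [hy] at hm ⊢
      have hneg : netF q C P w (X ω) < 0 := by nlinarith
      rw [Real.sign_of_neg hneg, Real.sign_of_neg (by norm_num : (-1:ℝ) < 0)]
  rw [hempty]
  exact measure_empty

end
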